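/- arXiv:math/0701115 — 2 statements merged into one kernel-verified Lean document; each statement's English description precedes it below -/
import Mathlib

section
/- If I is an ideal of the order O_f of conductor f in the ring of integers Z_K of an imaginary quadratic field K, and I is prime to f (i.e. I + f·O_f = O_f), then I is a proper O_f-ideal, meaning its multiplier ring {λ ∈ K : λI ⊆ I} equals O_f. -/
open NumberField Pointwise

/-! A multiplier `λ` of `I` stabilises the nonzero finitely generated `ℤ`-module `I ⊆ 𝓞 K`, so it
is integral and `f λ ∈ O_f`. Writing `1 = a + c f` with `a ∈ I` then gives
`λ = λ a + c (f λ) ∈ O_f`. -/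

/-- The order `O_f = ℤ + f·ℤ_K` of conductor `f` in a number field `K`,
realized as the ℤ-subalgebra generated by `f · (integral closure of ℤ in K)`. -/
noncomputable def order (K : Type*) [Field K] (f : ℕ) : Subalgebra ℤ K :=
  Algebra.adjoin ℤ ((f : K) • ((integralClosure ℤ K : Subalgebra ℤ K) : Set K))

theorem Subalgebra.mem_of_mul_mem_of_sup_span_eq_top {S A : Type*} [CommRing S] [CommRing A]
    [Algebra S A] {R : Subalgebra S A} {I : Ideal R} {r : R} (hIr : I ⊔ Ideal.span {r} = ⊤)
    {l : A} (hlI : ∀ x ∈ I, l * x ∈ R) (hrl : r * l ∈ R) : l ∈ R := by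
  obtain ⟨a, ha, b, hb, hab⟩ := Submodule.mem_sup.mp (hIr ▸ Submodule.mem_top : (1 : R) ∈ _)
  obtain ⟨c, rfl⟩ := Ideal.mem_span_singleton'.mp hb
  have hl : l = l * a + c * (r * l) := by
    calc l = l * ((a + c * r : R) : A) := by rw [hab, OneMemClass.coe_one, mul_one]
      _ = l * a + c * (r * l) := by push_cast; ring
  rw [hl]
  exact add_mem (hlI a ha) (mul_mem c.2 hrl)

theorem isIntegral_of_mul_mem_image_ideal {A : Type*} [CommRing A] [IsDomain A]
    {R : Subalgebra ℤ A} [Module.Finite ℤ R] {I : Ideal R} (hI : I ≠ ⊥) {l : A}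
    (hl : ∀ x ∈ Subtype.val '' (I : Set R), l * x ∈ Subtype.val '' (I : Set R)) :
    IsIntegral ℤ l := by
  let J : Submodule ℤ A := (I.restrictScalars ℤ).map R.val.toLinearMap
  have hJ : (J : Set A) = Subtype.val '' (I : Set R) := Submodule.map_coe _ _
  refine isIntegral_of_smul_mem_submodule J ?_ ((IsNoetherian.noetherian _).map _) l ?_
  · obtain ⟨y, hy, hy0⟩ := Submodule.exists_mem_ne_zero_of_ne_bot hI
    exact Submodule.ne_bot_iff _ |>.mpr ⟨y, ⟨y, hy, rfl⟩, by simpa using hy0⟩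
  · intro x hx
    rw [← SetLike.mem_coe, hJ] at hx ⊢
    exact hl x hx

theorem order_le_integralClosure (K : Type*) [Field K] (f : ℕ) :
    order K f ≤ integralClosure ℤ K :=
  Algebra.adjoin_le <| by
    rintro _ ⟨y, hy, rfl⟩
    exact mul_mem (Subalgebra.natCast_mem _ f) hy

instance (K : Type*) [Field K] [NumberField K] (f : ℕ) : Module.Finite ℤ (order K f) :=
  have : IsNoetherian ℤ (integralClosure ℤ K) := inferInstanceAs (IsNoetherian ℤ (𝓞 K))
  Module.Finite.of_injective (Subalgebra.inclusion (order_le_integralClosure K f)).toLinearMap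
    (Subalgebra.inclusion_injective (order_le_integralClosure K f))

theorem natCast_mul_mem_order {K : Type*} [Field K] (f : ℕ) {l : K} (hl : IsIntegral ℤ l) :
    (f : K) * l ∈ order K f :=
  Algebra.subset_adjoin ⟨l, hl, rfl⟩

theorem stmt0_general (K : Type*) [Field K] [NumberField K]
    (f : ℕ) (I : Ideal ↥(order K f)) (hI : I ≠ ⊥)
    (hprime : I ⊔ Ideal.span {(f : ↥(order K f))} = ⊤) :
    {l : K | ∀ x ∈ Subtype.val '' (I : Set ↥(order K f)),
        l * x ∈ Subtype.val '' (I : Set ↥(order K f))}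
      = (order K f : Set K) := by
  ext l
  constructor
  · intro hl
    refine Subalgebra.mem_of_mul_mem_of_sup_span_eq_top hprime (fun x hx => ?_) ?_
    · obtain ⟨y, -, hy⟩ := hl x ⟨x, hx, rfl⟩
      exact hy ▸ y.2
    · simpa using natCast_mul_mem_order f (isIntegral_of_mul_mem_image_ideal hI hl)
  · rintro hl _ ⟨y, hy, rfl⟩
    exact ⟨⟨l, hl⟩ * y, I.mul_mem_left _ hy, rfl⟩

/-- If `I` is a nonzero ideal of the order `O_f` of conductor `f` in an imaginary
quadratic field `K` which is prime to `f` (i.e. `I + f·O_f = O_f`), then `I` is proper: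
its multiplier ring `{λ ∈ K : λ·I ⊆ I}` equals `O_f`. -/
theorem stmt0 (K : Type*) [Field K] [NumberField K]
    (h2 : Module.finrank ℚ K = 2) (himag : ∀ φ : K →+* ℝ, False)
    (f : ℕ) (hf : 0 < f) (I : Ideal ↥(order K f)) (hI : I ≠ ⊥)
    (hprime : I ⊔ Ideal.span {(f : ↥(order K f))} = ⊤) :
    {l : K | ∀ x ∈ Subtype.val '' (I : Set ↥(order K f)),
        l * x ∈ Subtype.val '' (I : Set ↥(order K f))}
      = (order K f : Set K) :=
  stmt0_general K f I hI hprime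
end

section
/- If Q[a,b,c] and Q[a′,b′,c′] are matrices in Q_d (same discriminant d = b²−4ac = b′²−4a′c′ < 0) representing even positive-definite binary lattices in the same genus, then gcd(a,b,c) = gcd(a′,b′,c′). -/
/-!
The content `gcd(a, b, c)` of an even binary form is a genus invariant: if `gᵀ Q g = Q'` over
`ℤ_p`, then `a', b', c'` are `ℤ_p`-combinations of `a, b, c` (for `a'` and `c'` after
cancelling the factor `2` on the diagonal, which is harmless in the domain `ℤ_p`), so the
content of `Q` divides that of `Q'` in every `ℤ_p`, hence in `ℤ`. Since `g` is invertible
the argument runs both ways.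
-/

open Matrix

/-- The matrix `Q[a,b,c] = [[2a,b],[b,2c]]`. -/
def Qmat (a b c : ℤ) : Matrix (Fin 2) (Fin 2) ℤ := !![2 * a, b; b, 2 * c]

theorem Int.dvd_of_forall_padicInt_dvd {m n : ℤ}
    (h : ∀ (p : ℕ) [Fact p.Prime], (m : ℤ_[p]) ∣ (n : ℤ_[p])) : m ∣ n := by
  rw [← Int.natAbs_dvd_natAbs, Nat.dvd_iff_prime_pow_dvd_dvd]
  intro p k hp hpk
  have : Fact p.Prime := ⟨hp⟩
  have hpk_m : (p : ℤ_[p]) ^ k ∣ (m : ℤ_[p]) := by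
    exact_mod_cast Int.cast_dvd_cast _ _ (Int.natCast_dvd.mpr hpk)
  exact Int.natCast_dvd.mp ((PadicInt.pow_p_dvd_int_iff k n).mp (hpk_m.trans (h p)))

theorem Matrix.transpose_mul_mul_inv_eq {R n : Type*} [CommRing R] [Fintype n] [DecidableEq n]
    {g A B : Matrix n n R} (hg : IsUnit g.det) (h : gᵀ * A * g = B) :
    g⁻¹ᵀ * B * g⁻¹ = A := by
  rw [← h, transpose_nonsing_inv, Matrix.mul_assoc, Matrix.mul_assoc, mul_nonsing_inv _ hg,
    Matrix.mul_one, ← Matrix.mul_assoc, ← transpose_nonsing_inv, ← transpose_mul,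
    mul_nonsing_inv _ hg, transpose_one, Matrix.one_mul]

theorem dvd_of_transpose_mul_Qmat_mul_eq {R : Type*} [CommRing R] [IsDomain R] [CharZero R]
    {a b c a' b' c' : ℤ} {g : Matrix (Fin 2) (Fin 2) R}
    (h : gᵀ * (Qmat a b c).map Int.cast * g = (Qmat a' b' c').map Int.cast)
    {x : R} (ha : x ∣ a) (hb : x ∣ b) (hc : x ∣ c) : x ∣ a' ∧ x ∣ b' ∧ x ∣ c' := by
  have h00 := congrFun (congrFun h 0) 0
  have h01 := congrFun (congrFun h 0) 1
  have h11 := congrFun (congrFun h 1) 1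
  simp only [Qmat, Fin.isValue, Matrix.mul_apply, transpose_apply, map_apply, of_apply,
    cons_val', cons_val_fin_one, Fin.sum_univ_succ, cons_val_zero, Finset.univ_unique,
    Fin.default_eq_zero, cons_val_succ, Finset.sum_singleton, Fin.succ_zero_eq_one,
    Int.cast_mul, Int.cast_ofNat, cons_val_one] at h00 h01 h11
  have h2 : (2 : R) ≠ 0 := two_ne_zero
  have ha' : (a' : R) = a * g 0 0 ^ 2 + b * (g 0 0 * g 1 0) + c * g 1 0 ^ 2 :=
    mul_left_cancel₀ h2 (by linear_combination -h00)
  have hb' : (b' : R) = a * (2 * g 0 0 * g 0 1) + b * (g 0 0 * g 1 1 + g 1 0 * g 0 1)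
      + c * (2 * g 1 0 * g 1 1) := by
    linear_combination -h01
  have hc' : (c' : R) = a * g 0 1 ^ 2 + b * (g 0 1 * g 1 1) + c * g 1 1 ^ 2 :=
    mul_left_cancel₀ h2 (by linear_combination -h11)
  have combination (u v w : R) : x ∣ a * u + b * v + c * w :=
    dvd_add (dvd_add (ha.mul_right u) (hb.mul_right v)) (hc.mul_right w)
  exact ⟨ha' ▸ combination .., hb' ▸ combination .., hc' ▸ combination ..⟩

theorem Qmat_gcd_dvd_gcd_of_forall_padicInt_congr {a b c a' b' c' : ℤ}
    (h : ∀ (p : ℕ) [Fact p.Prime], ∃ g : Matrix (Fin 2) (Fin 2) ℤ_[p],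
      gᵀ * (Qmat a b c).map Int.cast * g = (Qmat a' b' c').map Int.cast) :
    Int.gcd a (Int.gcd b c) ∣ Int.gcd a' (Int.gcd b' c') := by
  set G : ℤ := (Int.gcd a (Int.gcd b c) : ℤ)
  have hG : G ∣ a ∧ G ∣ b ∧ G ∣ c :=
    ⟨Int.gcd_dvd_left _ _, (Int.gcd_dvd_right _ _).trans (Int.gcd_dvd_left _ _),
      (Int.gcd_dvd_right _ _).trans (Int.gcd_dvd_right _ _)⟩
  have hG_padic (p : ℕ) [Fact p.Prime] :
      (G : ℤ_[p]) ∣ a' ∧ (G : ℤ_[p]) ∣ b' ∧ (G : ℤ_[p]) ∣ c' :=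
    let ⟨_, hg⟩ := h p
    dvd_of_transpose_mul_Qmat_mul_eq hg (Int.cast_dvd_cast _ _ hG.1)
      (Int.cast_dvd_cast _ _ hG.2.1) (Int.cast_dvd_cast _ _ hG.2.2)
  have hG' : G ∣ a' ∧ G ∣ b' ∧ G ∣ c' :=
    ⟨Int.dvd_of_forall_padicInt_dvd fun p _ ↦ (hG_padic p).1,
      Int.dvd_of_forall_padicInt_dvd fun p _ ↦ (hG_padic p).2.1,
      Int.dvd_of_forall_padicInt_dvd fun p _ ↦ (hG_padic p).2.2⟩
  exact Int.dvd_gcd hG'.1 (Int.dvd_coe_gcd hG'.2.1 hG'.2.2)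

theorem stmt14_general
    (a b c a' b' c' : ℤ)
    (hgenus : ∀ (p : ℕ) (_ : Fact p.Prime), ∃ g : Matrix (Fin 2) (Fin 2) ℤ_[p],
      IsUnit g.det ∧
        gᵀ * (Qmat a b c).map (fun t => (t : ℤ_[p])) * g
          = (Qmat a' b' c').map (fun t => (t : ℤ_[p]))) :
    Int.gcd a (Int.gcd b c) = Int.gcd a' (Int.gcd b' c') := by
  refine Nat.dvd_antisymm (Qmat_gcd_dvd_gcd_of_forall_padicInt_congr fun p _ ↦ ?_)
    (Qmat_gcd_dvd_gcd_of_forall_padicInt_congr fun p _ ↦ ?_)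
  · obtain ⟨g, -, hg⟩ := hgenus p ‹_›
    exact ⟨g, hg⟩
  · obtain ⟨g, hdet, hg⟩ := hgenus p ‹_›
    exact ⟨g⁻¹, transpose_mul_mul_inv_eq hdet hg⟩

/-- If `Q[a,b,c]` and `Q[a′,b′,c′]` are positive-definite forms of the same
discriminant `d < 0` representing lattices in the same genus (i.e., equivalent over
`ℤ_p` for every prime `p`; equivalence over `ℝ` is automatic as both are positive
definite), then `gcd(a,b,c) = gcd(a′,b′,c′)`. -/
theorem stmt14 (d : ℤ) (hdneg : d < 0)
    (a b c a' b' c' : ℤ) (ha : 0 < a) (hc : 0 < c) (ha' : 0 < a') (hc' : 0 < c')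
    (hd : b ^ 2 - 4 * a * c = d) (hd' : b' ^ 2 - 4 * a' * c' = d)
    (hgenus : ∀ (p : ℕ) (_ : Fact p.Prime), ∃ g : Matrix (Fin 2) (Fin 2) ℤ_[p],
      IsUnit g.det ∧
        gᵀ * (Qmat a b c).map (fun t => (t : ℤ_[p])) * g
          = (Qmat a' b' c').map (fun t => (t : ℤ_[p]))) :
    Int.gcd a (Int.gcd b c) = Int.gcd a' (Int.gcd b' c') :=
  stmt14_general a b c a' b' c' hgenus
end
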